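/- arXiv:1009.1799 — 3 statements merged into one kernel-verified Lean document; each statement's English description precedes it below -/
import Mathlib

section
/- If $f:\mathbb{R}\to\mathbb{R}$ is an increasing homeomorphism that is $M$-quasisymmetric (i.e. $M^{-1}\le |f(I)|/|f(J)|\le M$ for all adjacent intervals $I,J$ of equal length), then for all pairs of intervals $J\subset I$ one has $(1+M)^{-2}(|J|/|I|)^q \le |f(J)|/|f(I)| \le 4(|J|/|I|)^p$, where $p=\log_2(1+M^{-1})$ and $q=\log_2(1+M)$. -/
/-!
Quasisymmetry at the midpoint of an interval forces each half to carry between `(1 + M)⁻¹` and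
`(1 + M⁻¹)⁻¹` of the image length. Iterating, every dyadic subinterval of `I` of level `n` has image
length between `(1 + M)⁻ⁿ |f(I)|` and `(1 + M⁻¹)⁻ⁿ |f(I)|`, and these factors are `(2⁻ⁿ)^q` and
`(2⁻ⁿ)^p`. Choosing `2⁻ⁿ` comparable to `|J|/|I|`, the interval `J` contains a dyadic interval of
level `n + 2`, which gives the lower bound, and is covered by two adjacent dyadic intervals of
level `n`, which gives the upper bound.
-/

open Real Set

def IsQuasisymmetric (M : ℝ) (f : ℝ → ℝ) : Prop :=
  ∀ x h : ℝ, 0 < h →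
    M⁻¹ ≤ (f (x + h) - f x) / (f x - f (x - h)) ∧
    (f (x + h) - f x) / (f x - f (x - h)) ≤ M

lemma mem_Icc_mul_add_of_div_mem_Icc {M A B : ℝ} (hA : 0 < A) (hB : 0 < B)
    (h₁ : M⁻¹ ≤ B / A) (h₂ : B / A ≤ M) :
    A ∈ Icc ((1 + M)⁻¹ * (A + B)) ((1 + M⁻¹)⁻¹ * (A + B)) ∧
    B ∈ Icc ((1 + M)⁻¹ * (A + B)) ((1 + M⁻¹)⁻¹ * (A + B)) := by
  have hM : 0 < M := (div_pos hB hA).trans_le h₂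
  rw [le_div_iff₀ hA] at h₁
  rw [div_le_iff₀ hA] at h₂
  have h₁' : M⁻¹ * B ≤ A := by
    calc M⁻¹ * B ≤ M⁻¹ * (M * A) := by gcongr
      _ = A := by field_simp
  have h₂' : A ≤ M * B := by
    calc A = M * (M⁻¹ * A) := by field_simp
      _ ≤ M * B := by gcongr
  refine ⟨⟨?_, ?_⟩, ?_, ?_⟩
  · rw [inv_mul_le_iff₀ (by positivity)]; linarith
  · rw [le_inv_mul_iff₀ (by positivity)]; linarith
  · rw [inv_mul_le_iff₀ (by positivity)]; linarith
  · rw [le_inv_mul_iff₀ (by positivity)]; linarith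

lemma mem_Icc_pow_succ_of_mem_Icc_mul {r s T P C : ℝ} {n : ℕ} (hr : 0 ≤ r) (hs : 0 ≤ s)
    (hP : P ∈ Icc (r ^ n * T) (s ^ n * T)) (hC : C ∈ Icc (r * P) (s * P)) :
    C ∈ Icc (r ^ (n + 1) * T) (s ^ (n + 1) * T) := by
  rw [pow_succ', pow_succ', mul_assoc, mul_assoc]
  exact ⟨(mul_le_mul_of_nonneg_left hP.1 hr).trans hC.1,
    hC.2.trans (mul_le_mul_of_nonneg_left hP.2 hs)⟩

namespace Monotone

variable {f : ℝ → ℝ} {a δ B c d : ℝ} {N : ℕ}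

lemma le_sub_of_forall_le_grid_increment (hf : Monotone f) (hδ : 0 < δ)
    (hgrid : ∀ k < N, B ≤ f (a + (k + 1) * δ) - f (a + k * δ))
    (hac : a ≤ c) (hcd : c + 2 * δ ≤ d) (hdN : d ≤ a + N * δ) : B ≤ f d - f c := by
  set k := ⌈(c - a) / δ⌉₊
  have hk₁ : c ≤ a + k * δ := by
    have := Nat.le_ceil ((c - a) / δ)
    rw [div_le_iff₀ hδ] at this
    linarith
  have hk₂ : a + k * δ < c + δ := by
    have := Nat.ceil_lt_add_one (div_nonneg (sub_nonneg.2 hac) hδ.le)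
    rw [← sub_lt_iff_lt_add, lt_div_iff₀ hδ] at this
    linarith
  have hkN : k < N := by
    have : (k + 1 : ℝ) * δ < N * δ := by linarith
    have : k + 1 < N := by exact_mod_cast lt_of_mul_lt_mul_right this hδ.le
    omega
  calc B ≤ f (a + (k + 1) * δ) - f (a + k * δ) := hgrid k hkN
    _ ≤ f d - f c := sub_le_sub (hf (by linarith)) (hf hk₁)

lemma sub_le_two_mul_of_forall_grid_increment_le (hf : Monotone f) (hδ : 0 < δ)
    (hgrid : ∀ k < N, f (a + (k + 1) * δ) - f (a + k * δ) ≤ B)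
    (hac : a ≤ c) (hcd : c < d) (hdc : d - c ≤ δ) (hdN : d ≤ a + N * δ) :
    f d - f c ≤ 2 * B := by
  set k := ⌊(c - a) / δ⌋₊
  have hk₁ : a + k * δ ≤ c := by
    have := Nat.floor_le (div_nonneg (sub_nonneg.2 hac) hδ.le)
    rw [le_div_iff₀ hδ] at this
    linarith
  have hk₂ : c < a + (k + 1) * δ := by
    have := Nat.lt_floor_add_one ((c - a) / δ)
    rw [div_lt_iff₀ hδ] at this
    linarith
  have hkN : k < N := by
    have : (k : ℝ) * δ < N * δ := by linarith
    exact_mod_cast lt_of_mul_lt_mul_right this hδ.le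
  have hpiece := hgrid k hkN
  by_cases hd : d ≤ a + (k + 1) * δ
  · have hB : 0 ≤ B := (sub_nonneg.2 (hf (by linarith))).trans hpiece
    linarith [hf hd, hf hk₁]
  · replace hd := not_le.1 hd
    have hk1N : k + 1 < N := by
      have : (k + 1 : ℝ) * δ < N * δ := by linarith
      exact_mod_cast lt_of_mul_lt_mul_right this hδ.le
    have hnext := hgrid (k + 1) hk1N
    push_cast at hnext
    have hd' : d ≤ a + (k + 1 + 1) * δ := by linarith
    linarith [hf hd', hf hk₁]

end Monotone

lemma inv_pow_eq_inv_two_pow_rpow_logb {x : ℝ} (hx : 0 < x) (n : ℕ) :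
    x⁻¹ ^ n = ((2 : ℝ) ^ n)⁻¹ ^ logb 2 x := by
  conv_lhs => rw [← rpow_logb two_pos (by norm_num) hx]
  rw [inv_pow, inv_rpow (by positivity), ← rpow_mul_natCast (by norm_num),
    ← rpow_natCast_mul (by norm_num), mul_comm]

lemma exists_inv_two_pow_lt_le {t : ℝ} (ht₀ : 0 < t) (ht₁ : t ≤ 1) :
    ∃ n : ℕ, ((2 : ℝ) ^ (n + 1))⁻¹ < t ∧ t ≤ ((2 : ℝ) ^ n)⁻¹ := by
  obtain ⟨n, hn₁, hn₂⟩ := exists_nat_pow_near ((one_le_inv₀ ht₀).2 ht₁) one_lt_two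
  exact ⟨n, (inv_lt_comm₀ (by positivity) ht₀).2 hn₂, (le_inv_comm₀ ht₀ (by positivity)).2 hn₁⟩

namespace IsQuasisymmetric

variable {M : ℝ} {f : ℝ → ℝ}

lemma pos (hqs : IsQuasisymmetric M f) (hf : StrictMono f) : 0 < M := by
  have hA : 0 < f 0 - f (0 - 1) := sub_pos.2 (hf (by norm_num))
  have hB : 0 < f (0 + 1) - f 0 := sub_pos.2 (hf (by norm_num))
  exact (div_pos hB hA).trans_le (hqs 0 1 one_pos).2

lemma halves_mem_Icc (hqs : IsQuasisymmetric M f) (hf : StrictMono f) (x : ℝ) {h : ℝ}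
    (hh : 0 < h) :
    f x - f (x - h) ∈
        Icc ((1 + M)⁻¹ * (f (x + h) - f (x - h))) ((1 + M⁻¹)⁻¹ * (f (x + h) - f (x - h))) ∧
    f (x + h) - f x ∈
        Icc ((1 + M)⁻¹ * (f (x + h) - f (x - h))) ((1 + M⁻¹)⁻¹ * (f (x + h) - f (x - h))) := by
  have hsum : f (x + h) - f (x - h) = (f x - f (x - h)) + (f (x + h) - f x) := by ring
  rw [hsum]
  exact mem_Icc_mul_add_of_div_mem_Icc (sub_pos.2 (hf (by linarith)))
    (sub_pos.2 (hf (by linarith))) (hqs x h hh).1 (hqs x h hh).2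

lemma dyadic_increment_mem_Icc (hqs : IsQuasisymmetric M f) (hf : StrictMono f) {x y : ℝ}
    (hxy : x < y) (n : ℕ) {k : ℕ} (hk : k < 2 ^ n) :
    f (x + (k + 1) * ((y - x) / 2 ^ n)) - f (x + k * ((y - x) / 2 ^ n)) ∈
      Icc ((1 + M)⁻¹ ^ n * (f y - f x)) ((1 + M⁻¹)⁻¹ ^ n * (f y - f x)) := by
  induction n generalizing k with
  | zero => simp_all
  | succ n ih =>
    -- the `k`-th interval of level `n + 1` is a half of the `k / 2`-th one of level `n`
    obtain ⟨j, hkj⟩ : ∃ j, k = 2 * j ∨ k = 2 * j + 1 := ⟨k / 2, by omega⟩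
    have hj : j < 2 ^ n := by rw [pow_succ] at hk; omega
    set δ := (y - x) / 2 ^ (n + 1)
    have hδ : 0 < δ := by have := sub_pos.2 hxy; positivity
    set m := x + (2 * j + 1) * δ
    have hleft : x + j * ((y - x) / 2 ^ n) = m - δ := by
      simp only [m, δ, pow_succ]; field_simp; ring
    have hright : x + (j + 1) * ((y - x) / 2 ^ n) = m + δ := by
      simp only [m, δ, pow_succ]; field_simp; ring
    have hparent := ih hj
    rw [hleft, hright] at hparent
    have hhalves := hqs.halves_mem_Icc hf m hδ
    have hM := hqs.pos hf
    rcases hkj with rfl | rfl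
    · have e₀ : x + ((2 * j : ℕ) : ℝ) * δ = m - δ := by push_cast; ring
      have e₁ : x + (((2 * j : ℕ) : ℝ) + 1) * δ = m := by push_cast; ring
      rw [e₀, e₁]
      exact mem_Icc_pow_succ_of_mem_Icc_mul (by positivity) (by positivity) hparent hhalves.1
    · have e₀ : x + ((2 * j + 1 : ℕ) : ℝ) * δ = m := by push_cast; ring
      have e₁ : x + (((2 * j + 1 : ℕ) : ℝ) + 1) * δ = m + δ := by push_cast; ring
      rw [e₀, e₁]
      exact mem_Icc_pow_succ_of_mem_Icc_mul (by positivity) (by positivity) hparent hhalves.2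

lemma lower_bound (hqs : IsQuasisymmetric M f) (hf : StrictMono f) {a b c d : ℝ}
    (hac : a ≤ c) (hcd : c < d) (hdb : d ≤ b) :
    (1 + M)⁻¹ ^ 2 * ((d - c) / (b - a)) ^ logb 2 (1 + M) ≤ (f d - f c) / (f b - f a) := by
  have hM := hqs.pos hf
  have hab : a < b := by linarith
  set t := (d - c) / (b - a)
  obtain ⟨n, hn₁, hn₂⟩ := exists_inv_two_pow_lt_le (t := t)
    (div_pos (by linarith) (by linarith)) (div_le_one_of_le₀ (by linarith) (by linarith))
  set δ := (b - a) / 2 ^ (n + 2)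
  have hδ : 0 < δ := div_pos (by linarith) (by positivity)
  have h2δ : c + 2 * δ ≤ d := by
    have : 2 * δ = (b - a) * (2 ^ (n + 1))⁻¹ := by simp only [δ, pow_succ]; field_simp
    have : d - c = (b - a) * t := by rw [mul_div_cancel₀ _ (sub_ne_zero.2 hab.ne')]
    nlinarith
  have hdN : d ≤ a + ((2 ^ (n + 2) : ℕ) : ℝ) * δ := by
    have : a + ((2 ^ (n + 2) : ℕ) : ℝ) * δ = b := by simp only [δ]; push_cast; field_simp; ring
    linarith
  have hJ : (1 + M)⁻¹ ^ (n + 2) * (f b - f a) ≤ f d - f c :=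
    hf.monotone.le_sub_of_forall_le_grid_increment hδ
      (fun k hk ↦ (hqs.dyadic_increment_mem_Icc hf hab (n + 2) hk).1) hac h2δ hdN
  have hscale : t ^ logb 2 (1 + M) ≤ (1 + M)⁻¹ ^ n := by
    rw [inv_pow_eq_inv_two_pow_rpow_logb (by linarith)]
    exact rpow_le_rpow (by positivity) hn₂ (logb_nonneg one_lt_two (by linarith))
  rw [le_div_iff₀ (sub_pos.2 (hf hab))]
  calc (1 + M)⁻¹ ^ 2 * t ^ logb 2 (1 + M) * (f b - f a)
      ≤ (1 + M)⁻¹ ^ 2 * (1 + M)⁻¹ ^ n * (f b - f a) := by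
        gcongr
        exact (sub_pos.2 (hf hab)).le
    _ = (1 + M)⁻¹ ^ (n + 2) * (f b - f a) := by ring
    _ ≤ f d - f c := hJ

lemma upper_bound (hqs : IsQuasisymmetric M f) (hM : 1 ≤ M) (hf : StrictMono f) {a b c d : ℝ}
    (hac : a ≤ c) (hcd : c < d) (hdb : d ≤ b) :
    (f d - f c) / (f b - f a) ≤ 4 * ((d - c) / (b - a)) ^ logb 2 (1 + M⁻¹) := by
  have hab : a < b := by linarith
  set t := (d - c) / (b - a)
  have ht : 0 < t := div_pos (by linarith) (by linarith)
  obtain ⟨n, hn₁, hn₂⟩ :=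
    exists_inv_two_pow_lt_le ht (div_le_one_of_le₀ (by linarith) (by linarith))
  set δ := (b - a) / 2 ^ n
  have hδ : 0 < δ := div_pos (by linarith) (by positivity)
  have hdc : d - c ≤ δ := by
    have : d - c = (b - a) * t := by rw [mul_div_cancel₀ _ (sub_ne_zero.2 hab.ne')]
    have : δ = (b - a) * (2 ^ n)⁻¹ := div_eq_mul_inv _ _
    nlinarith
  have hdN : d ≤ a + ((2 ^ n : ℕ) : ℝ) * δ := by
    have : a + ((2 ^ n : ℕ) : ℝ) * δ = b := by simp only [δ]; push_cast; field_simp; ring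
    linarith
  have hJ : f d - f c ≤ 2 * ((1 + M⁻¹)⁻¹ ^ n * (f b - f a)) :=
    hf.monotone.sub_le_two_mul_of_forall_grid_increment_le hδ
      (fun k hk ↦ (hqs.dyadic_increment_mem_Icc hf hab n hk).2) hac hcd hdc hdN
  have hscale : (1 + M⁻¹)⁻¹ ^ n ≤ 2 * t ^ logb 2 (1 + M⁻¹) := by
    have h2p : (2 : ℝ) ^ logb 2 (1 + M⁻¹) ≤ 2 := by
      rw [rpow_logb two_pos (by norm_num) (by positivity)]
      linarith [inv_le_one_of_one_le₀ hM]
    have hn : ((2 : ℝ) ^ n)⁻¹ ≤ 2 * t := by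
      rw [pow_succ, mul_inv] at hn₁
      linarith
    calc (1 + M⁻¹)⁻¹ ^ n = ((2 : ℝ) ^ n)⁻¹ ^ logb 2 (1 + M⁻¹) :=
          inv_pow_eq_inv_two_pow_rpow_logb (by positivity) n
      _ ≤ (2 * t) ^ logb 2 (1 + M⁻¹) :=
          rpow_le_rpow (by positivity) hn
            (logb_nonneg one_lt_two (le_add_of_nonneg_right (by positivity)))
      _ = 2 ^ logb 2 (1 + M⁻¹) * t ^ logb 2 (1 + M⁻¹) := mul_rpow (by norm_num) ht.le
      _ ≤ 2 * t ^ logb 2 (1 + M⁻¹) := by gcongr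
  rw [div_le_iff₀ (sub_pos.2 (hf hab))]
  calc f d - f c ≤ 2 * ((1 + M⁻¹)⁻¹ ^ n * (f b - f a)) := hJ
    _ ≤ 2 * (2 * t ^ logb 2 (1 + M⁻¹) * (f b - f a)) := by
        gcongr
        exact (sub_pos.2 (hf hab)).le
    _ = 4 * t ^ logb 2 (1 + M⁻¹) * (f b - f a) := by ring

end IsQuasisymmetric

theorem stmt0_general (M : ℝ) (hM : 1 ≤ M) (f : ℝ → ℝ)
    (hmono : StrictMono f)
    (hqs : ∀ x h : ℝ, 0 < h →
      M⁻¹ ≤ (f (x + h) - f x) / (f x - f (x - h)) ∧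
      (f (x + h) - f x) / (f x - f (x - h)) ≤ M)
    (a b c d : ℝ) (hac : a ≤ c) (hcd : c < d) (hdb : d ≤ b) :
    (1 + M)⁻¹ ^ (2 : ℕ) * ((d - c) / (b - a)) ^ (Real.logb 2 (1 + M)) ≤
        (f d - f c) / (f b - f a) ∧
    (f d - f c) / (f b - f a) ≤ 4 * ((d - c) / (b - a)) ^ (Real.logb 2 (1 + M⁻¹)) :=
  have hqs : IsQuasisymmetric M f := hqs
  ⟨hqs.lower_bound hmono hac hcd hdb, hqs.upper_bound hM hmono hac hcd hdb⟩

/-- Wu's lemma: an increasing `M`-quasisymmetric homeomorphism of ℝ satisfies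
`(1+M)⁻² (|J|/|I|)^q ≤ |f(J)|/|f(I)| ≤ 4 (|J|/|I|)^p` for all intervals `J ⊆ I`,
where `p = log₂(1+M⁻¹)` and `q = log₂(1+M)`. Intervals are given by endpoints:
`I = [a,b]`, `J = [c,d]` with `a ≤ c ≤ d ≤ b`, `c < d`. -/
theorem stmt0 (M : ℝ) (hM : 1 ≤ M) (f : ℝ → ℝ)
    (hmono : StrictMono f) (hcont : Continuous f) (hsurj : Function.Surjective f)
    (hqs : ∀ x h : ℝ, 0 < h →
      M⁻¹ ≤ (f (x + h) - f x) / (f x - f (x - h)) ∧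
      (f (x + h) - f x) / (f x - f (x - h)) ≤ M)
    (a b c d : ℝ) (hac : a ≤ c) (hcd : c < d) (hdb : d ≤ b) :
    (1 + M)⁻¹ ^ (2 : ℕ) * ((d - c) / (b - a)) ^ (Real.logb 2 (1 + M)) ≤
        (f d - f c) / (f b - f a) ∧
    (f d - f c) / (f b - f a) ≤ 4 * ((d - c) / (b - a)) ^ (Real.logb 2 (1 + M⁻¹)) :=
  stmt0_general M hM f hmono hqs a b c d hac hcd hdb
end

section
/- For every positive integer $m$ and every real $x$ with $0 < x < 1 - \sqrt[m]{\frac{m}{m+1}}$, one has $1 - mx \ge (1-x)^{m+1}$. -/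
/-!
Put `y = 1 - x`, so that `1 - (1 - x) ^ (m + 1) = x * (1 + y + ⋯ + y ^ m)` and the claim becomes
`1 + y + ⋯ + y ^ m ≥ m`. Since `0 ≤ y ≤ 1`, the sum is at least `(m + 1) y ^ m`, and the bound on `x`
says exactly that `y ^ m ≥ m / (m + 1)`.
-/

open Finset

lemma natCast_le_geom_sum {m : ℕ} {y : ℝ} (hy₀ : 0 ≤ y) (hy₁ : y ≤ 1)
    (hpow : (m : ℝ) / (m + 1) ≤ y ^ m) : (m : ℝ) ≤ ∑ i ∈ range (m + 1), y ^ i := by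
  have hsum : (m + 1 : ℝ) * y ^ m ≤ ∑ i ∈ range (m + 1), y ^ i := by
    simpa [nsmul_eq_mul] using card_nsmul_le_sum (range (m + 1)) (fun i ↦ y ^ i) (y ^ m)
      fun i hi ↦ pow_le_pow_of_le_one hy₀ hy₁ (Nat.lt_succ_iff.mp (mem_range.mp hi))
  calc (m : ℝ) = (m + 1) * ((m : ℝ) / (m + 1)) := by field_simp
    _ ≤ (m + 1) * y ^ m := by gcongr
    _ ≤ _ := hsum

lemma one_sub_pow_succ_le_one_sub_mul {m : ℕ} {x : ℝ} (hx₀ : 0 ≤ x) (hx₁ : x ≤ 1)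
    (hpow : (m : ℝ) / (m + 1) ≤ (1 - x) ^ m) : (1 - x) ^ (m + 1) ≤ 1 - m * x := by
  have hgeom := natCast_le_geom_sum (sub_nonneg.mpr hx₁) (by linarith) hpow
  calc (1 - x) ^ (m + 1) = 1 - (1 - (1 - x)) * ∑ i ∈ range (m + 1), (1 - x) ^ i := by
        rw [mul_neg_geom_sum]; ring
    _ ≤ 1 - m * x := by
        rw [sub_sub_cancel, mul_comm (m : ℝ)]; gcongr

lemma le_pow_of_rpow_inv_lt {a y : ℝ} {m : ℕ} (ha : 0 ≤ a) (hm : m ≠ 0)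
    (h : a ^ ((m : ℝ)⁻¹) < y) : a ≤ y ^ m := by
  rw [← Real.rpow_inv_natCast_pow ha hm]
  exact pow_le_pow_left₀ (by positivity) h.le m

theorem stmt6_general (m : ℕ) (x : ℝ) (hx : 0 < x)
    (hx' : x < 1 - ((m : ℝ) / (m + 1)) ^ ((1 : ℝ) / m)) :
    (1 - x) ^ (m + 1) ≤ 1 - m * x := by
  rcases eq_or_ne m 0 with rfl | hm
  · simpa using hx.le
  have hroot : ((m : ℝ) / (m + 1)) ^ ((m : ℝ)⁻¹) < 1 - x := by
    rw [← one_div]; linarith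
  have hroot_pos : 0 < ((m : ℝ) / (m + 1)) ^ ((m : ℝ)⁻¹) := by positivity
  exact one_sub_pow_succ_le_one_sub_mul hx.le (by linarith)
    (le_pow_of_rpow_inv_lt (by positivity) hm hroot)

/-- For every positive integer `m` and real `x` with
`0 < x < 1 - (m/(m+1))^(1/m)`, one has `1 - m x ≥ (1-x)^(m+1)`. -/
theorem stmt6 (m : ℕ) (hm : 1 ≤ m) (x : ℝ) (hx : 0 < x)
    (hx' : x < 1 - ((m : ℝ) / (m + 1)) ^ ((1 : ℝ) / m)) :
    (1 - x) ^ (m + 1) ≤ 1 - m * x :=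
  stmt6_general m x hx hx'
end

section
/- Let $A\in(0,1]$, $0<d<1$, $n\ge 1$, and let $x_1,\dots,x_n\in[A,1]$. Then $\frac{1+x_1^d+\cdots+x_n^d}{(1+x_1+\cdots+x_n)^d} \ge (1+A)^{1-d}$. -/
/-!
With `S = ∑ xᵢ` we have `A ≤ S` (as `n ≥ 1`) and `S ≤ ∑ xᵢ ^ d` (as `xᵢ ≤ xᵢ ^ d` on `[0,1]`), so
`(1 + A) ^ (1 - d) * (1 + S) ^ d ≤ (1 + S) ^ (1 - d) * (1 + S) ^ d = 1 + S ≤ 1 + ∑ xᵢ ^ d`.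
-/

open Finset

theorem Real.rpow_one_sub_mul_rpow_le {a b d : ℝ} (ha : 0 ≤ a) (hab : a ≤ b) (hd : d ≤ 1) :
    a ^ (1 - d) * b ^ d ≤ b :=
  calc a ^ (1 - d) * b ^ d ≤ b ^ (1 - d) * b ^ d :=
        mul_le_mul_of_nonneg_right (Real.rpow_le_rpow ha hab (by linarith))
          (Real.rpow_nonneg (ha.trans hab) d)
    _ = b := by rw [← Real.rpow_add' (ha.trans hab) (by norm_num), sub_add_cancel, Real.rpow_one]

theorem stmt10_general (A d : ℝ) (hA : 0 < A) (hd1 : d < 1)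
    (n : ℕ) (hn : 1 ≤ n) (x : Fin n → ℝ) (hx : ∀ i, A ≤ x i ∧ x i ≤ 1) :
    (1 + A) ^ (1 - d) ≤
      (1 + ∑ i, (x i) ^ d) / (1 + ∑ i, x i) ^ d := by
  have hx_nonneg : ∀ i, 0 ≤ x i := fun i => hA.le.trans (hx i).1
  have hA_le_sum : A ≤ ∑ i, x i :=
    (hx ⟨0, hn⟩).1.trans (single_le_sum (fun i _ => hx_nonneg i) (mem_univ _))
  have hsum_pos : 0 < 1 + ∑ i, x i := by linarith
  rw [le_div_iff₀ (Real.rpow_pos_of_pos hsum_pos d)]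
  calc (1 + A) ^ (1 - d) * (1 + ∑ i, x i) ^ d ≤ 1 + ∑ i, x i :=
        Real.rpow_one_sub_mul_rpow_le (by linarith) (by linarith) hd1.le
    _ ≤ 1 + ∑ i, x i ^ d := by
        gcongr with i
        exact Real.self_le_rpow_of_le_one (hx_nonneg i) (hx i).2 hd1.le

/-- For `A ∈ (0,1]`, `0 < d < 1`, `n ≥ 1`, and `x₁,…,xₙ ∈ [A,1]`:
`(1 + ∑ xᵢ^d) / (1 + ∑ xᵢ)^d ≥ (1+A)^(1-d)`. -/
theorem stmt10 (A d : ℝ) (hA : 0 < A) (hA1 : A ≤ 1) (hd : 0 < d) (hd1 : d < 1)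
    (n : ℕ) (hn : 1 ≤ n) (x : Fin n → ℝ) (hx : ∀ i, A ≤ x i ∧ x i ≤ 1) :
    (1 + A) ^ (1 - d) ≤
      (1 + ∑ i, (x i) ^ d) / (1 + ∑ i, x i) ^ d :=
  stmt10_general A d hA hd1 n hn x hx
end
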